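/- arXiv:0706.3990 — 2 statements merged into one kernel-verified Lean document; each statement's English description precedes it below -/
import Mathlib

section
/- For every point x₀ ∈ Ω and every ε > 0 there exist δ > 0 and polynomials P₁, …, P_K : ℝⁿ → ℝ such that for every x ∈ B(x₀, δ) ∩ Ω and every i = 1, …, K one has f_i(x) − ε ≤ F_i(x, (D^α P_j(x))_{1≤j≤K, α∈A}) ≤ f_i(x). -/
open scoped BigOperators

/-- The partial derivative operator `∂ᵢ` for functions on `ℝⁿ`. -/
noncomputable def partialDerivOp {n : ℕ} (i : Fin n) (f : (Fin n → ℝ) → ℝ) :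
    (Fin n → ℝ) → ℝ :=
  fun x => fderiv ℝ f x (Pi.single i 1)

/-- The iterated partial derivative `D^α = ∂₁^{α 1} ∘ ⋯ ∘ ∂ₙ^{α n}` associated
with a multi-index `α ∈ ℕⁿ`. -/
noncomputable def multiDeriv {n : ℕ} (α : Fin n → ℕ) (f : (Fin n → ℝ) → ℝ) :
    (Fin n → ℝ) → ℝ :=
  (List.finRange n).foldr (fun i g => (partialDerivOp i)^[α i] ∘ g) id f

open MvPolynomial in
lemma hasFDerivAt_eval_pd {n : ℕ} (p : MvPolynomial (Fin n) ℝ) (x : Fin n → ℝ) :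
    HasFDerivAt (fun y => eval y p)
      (∑ k, eval x (pderiv k p) • ContinuousLinearMap.proj (R := ℝ) (φ := fun _ : Fin n => ℝ) k) x := by
  induction p using MvPolynomial.induction_on with
  | C a =>
      simpa using hasFDerivAt_const (eval x (C a : MvPolynomial (Fin n) ℝ)) x
  | add p q hp hq =>
      have := hp.add hq
      refine HasFDerivAt.congr_fderiv (HasFDerivAt.congr_of_eventuallyEq this (Filter.EventuallyEq.of_eq ?_)) (Eq.symm ?_)
      · funext y; simp
      · simp [add_smul, Finset.sum_add_distrib]
  | mul_X p i hp =>
      have hXi : HasFDerivAt (fun y : Fin n → ℝ => y i)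
          (ContinuousLinearMap.proj (R := ℝ) (φ := fun _ : Fin n => ℝ) i) x := by
        exact (ContinuousLinearMap.proj (R := ℝ) (φ := fun _ : Fin n => ℝ) i).hasFDerivAt
      have := hp.mul hXi
      refine HasFDerivAt.congr_fderiv (HasFDerivAt.congr_of_eventuallyEq this (Filter.EventuallyEq.of_eq ?_)) (Eq.symm ?_)
      · funext y; simp
      · ext v
        simp only [pderiv_mul, ContinuousLinearMap.sum_apply, ContinuousLinearMap.smul_apply,
          ContinuousLinearMap.proj_apply, map_add, eval_mul, ContinuousLinearMap.add_apply,
          ContinuousLinearMap.coe_smul', Pi.smul_apply, smul_eq_mul, pderiv_X, eval_X,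
          Pi.single_apply]
        simp only [apply_ite (eval x), map_one, map_zero, mul_ite, mul_one, mul_zero,
          add_mul, ite_mul, zero_mul, Finset.sum_add_distrib, Finset.sum_ite_eq]
        simp [Finset.mul_sum]
        rw [add_comm]
        congr 1
        exact Finset.sum_congr rfl fun k _ => by ring

open MvPolynomial

lemma partialDerivOp_eval {n : ℕ} (i : Fin n) (p : MvPolynomial (Fin n) ℝ) :
    partialDerivOp i (fun y => eval y p) = fun y => eval y (pderiv i p) := by
  funext x
  have h := (hasFDerivAt_eval_pd p x).fderiv
  simp only [partialDerivOp, h, ContinuousLinearMap.sum_apply, ContinuousLinearMap.smul_apply,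
    ContinuousLinearMap.proj_apply, smul_eq_mul, Pi.single_apply]
  simp [Finset.sum_ite_eq]

lemma iter_partialDerivOp_eval {n : ℕ} (i : Fin n) (k : ℕ) (p : MvPolynomial (Fin n) ℝ) :
    (partialDerivOp i)^[k] (fun y => eval y p) = fun y => eval y ((⇑(pderiv i))^[k] p) := by
  induction k generalizing p with
  | zero => simp
  | succ k ih =>
      rw [Function.iterate_succ_apply, Function.iterate_succ_apply, partialDerivOp_eval, ih]

noncomputable def fmd {n : ℕ} (β : Fin n → ℕ) (p : MvPolynomial (Fin n) ℝ) :
    MvPolynomial (Fin n) ℝ :=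
  (List.finRange n).foldr (fun i q => (⇑(pderiv i))^[β i] q) p

lemma multiDeriv_eval {n : ℕ} (α : Fin n → ℕ) (p : MvPolynomial (Fin n) ℝ) :
    multiDeriv α (fun y => eval y p) = fun y => eval y (fmd α p) := by
  unfold multiDeriv fmd
  induction (List.finRange n) generalizing p with
  | nil => simp
  | cons i l ih =>
      simp only [List.foldr_cons, Function.comp_apply, ih, iter_partialDerivOp_eval]

noncomputable def Phi {n : ℕ} (c : Fin n → ℝ) (γ : Fin n → ℕ) : MvPolynomial (Fin n) ℝ :=
  ∏ k, (X k - C (c k)) ^ (γ k)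

lemma pderiv_shiftpow {n : ℕ} (c : Fin n → ℝ) (i k : Fin n) (e : ℕ) :
    pderiv i ((X k - C (c k)) ^ e : MvPolynomial (Fin n) ℝ)
      = if i = k then e • (X k - C (c k)) ^ (e - 1) else 0 := by
  rw [pderiv_pow]
  split
  · subst ‹i = k›
    simp [pderiv_X_self, nsmul_eq_mul]
  · have h : k ≠ i := fun he => ‹¬ _› he.symm
    simp [map_sub, pderiv_X_of_ne h, pderiv_C]

lemma pderiv_prod_zero {n : ℕ} (c : Fin n → ℝ) (γ : Fin n → ℕ) (i : Fin n)
    (s : Finset (Fin n)) (hi : i ∉ s) :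
    pderiv i (∏ k ∈ s, (X k - C (c k)) ^ (γ k) : MvPolynomial (Fin n) ℝ) = 0 := by
  induction s using Finset.induction_on with
  | empty => simp [pderiv_one]
  | @insert a s' ha ih =>
      rw [Finset.prod_insert ha, pderiv_mul, ih (fun hm => hi (Finset.mem_insert_of_mem hm)),
        pderiv_shiftpow]
      have : i ≠ a := fun he => hi (he ▸ Finset.mem_insert_self a s')
      simp [this]

lemma pderiv_Phi {n : ℕ} (c : Fin n → ℝ) (γ : Fin n → ℕ) (i : Fin n) :
    pderiv i (Phi c γ) = (γ i) • Phi c (Function.update γ i (γ i - 1)) := by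
  unfold Phi
  rw [← Finset.mul_prod_erase Finset.univ _ (Finset.mem_univ i), pderiv_mul,
    pderiv_prod_zero c γ i _ (Finset.notMem_erase i _), pderiv_shiftpow]
  simp only [mul_zero, add_zero]
  rw [← Finset.mul_prod_erase Finset.univ
    (fun k => (X k - C (c k)) ^ (Function.update γ i (γ i - 1) k)) (Finset.mem_univ i)]
  simp only [Function.update_self]
  have : ∏ k ∈ Finset.univ.erase i, (X k - C (c k) : MvPolynomial (Fin n) ℝ) ^ (Function.update γ i (γ i - 1) k)
      = ∏ k ∈ Finset.univ.erase i, (X k - C (c k)) ^ (γ k) := by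
    refine Finset.prod_congr rfl fun k hk => ?_
    rw [Function.update_of_ne (Finset.ne_of_mem_erase hk)]
  rw [this, if_pos trivial, smul_mul_assoc]

lemma iter_pderiv_Phi {n : ℕ} (c : Fin n → ℝ) (γ : Fin n → ℕ) (i : Fin n) (b : ℕ) :
    (⇑(pderiv i))^[b] (Phi c γ)
      = ((γ i).descFactorial b) • Phi c (Function.update γ i (γ i - b)) := by
  induction b with
  | zero => simp [Function.update_eq_self]
  | succ b ih =>
      rw [Function.iterate_succ_apply', ih, map_nsmul, pderiv_Phi]
      rw [Function.update_self, Function.update_idem, smul_smul]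
      rw [Nat.descFactorial_succ, Nat.sub_sub, mul_comm]

lemma iter_pderiv_nsmul {n : ℕ} (i : Fin n) (b a : ℕ) (p : MvPolynomial (Fin n) ℝ) :
    (⇑(pderiv i))^[b] (a • p) = a • (⇑(pderiv i))^[b] p := by
  induction b generalizing p with
  | zero => simp
  | succ b ih => rw [Function.iterate_succ_apply, map_nsmul, ih, ← Function.iterate_succ_apply]

lemma foldr_pderiv_Phi {n : ℕ} (c : Fin n → ℝ) (β γ : Fin n → ℕ) (l : List (Fin n))
    (hl : l.Nodup) :
    l.foldr (fun i q => (⇑(pderiv i))^[β i] q) (Phi c γ)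
      = (∏ i ∈ l.toFinset, (γ i).descFactorial (β i)) •
          Phi c (fun k => if k ∈ l then γ k - β k else γ k) := by
  induction l with
  | nil => simp
  | cons i l ih =>
      have hi : i ∉ l := (List.nodup_cons.mp hl).1
      rw [List.foldr_cons, ih (List.nodup_cons.mp hl).2, iter_pderiv_nsmul, iter_pderiv_Phi]
      simp only [if_neg hi]
      have h2 : Function.update (fun k => if k ∈ l then γ k - β k else γ k) i (γ i - β i)
          = fun k => if k ∈ (i :: l) then γ k - β k else γ k := by
        funext k
        by_cases hk : k = i
        · subst hk; simp [Function.update_self]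
        · simp [Function.update_of_ne hk, hk, List.mem_cons]
      rw [h2, smul_smul, List.toFinset_cons,
        Finset.prod_insert (by simpa using hi), mul_comm]

lemma fmd_Phi {n : ℕ} (c : Fin n → ℝ) (β γ : Fin n → ℕ) :
    fmd β (Phi c γ) = (∏ i, (γ i).descFactorial (β i)) • Phi c (fun k => γ k - β k) := by
  unfold fmd
  rw [foldr_pderiv_Phi c β γ _ (List.nodup_finRange n)]
  simp [List.toFinset_finRange, List.mem_finRange]

lemma eval_Phi_self {n : ℕ} (c : Fin n → ℝ) (γ : Fin n → ℕ) :
    eval c (Phi c γ) = if γ = 0 then 1 else 0 := by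
  unfold Phi
  rw [map_prod]
  split
  · subst ‹γ = 0›; simp
  · obtain ⟨i, hi⟩ : ∃ i, γ i ≠ 0 := by
      by_contra h
      push_neg at h
      exact ‹¬ _› (funext h)
    refine Finset.prod_eq_zero (Finset.mem_univ i) ?_
    simp [zero_pow hi]

lemma eval_fmd_Phi {n : ℕ} (c : Fin n → ℝ) (α β : Fin n → ℕ) :
    eval c (fmd β (Phi c α)) = if β = α then ((∏ i, Nat.factorial (α i) : ℕ) : ℝ) else 0 := by
  rw [fmd_Phi, map_nsmul, eval_Phi_self]
  by_cases hba : β = α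
  · subst hba
    have h0 : (fun k => β k - β k) = (0 : Fin n → ℕ) := by funext k; simp
    rw [h0, if_pos rfl, if_pos rfl]
    simp [Nat.descFactorial_self, nsmul_eq_mul, Nat.cast_prod]
  · rw [if_neg hba]
    by_cases h : ∀ i, β i ≤ α i
    · have hne : (fun k => α k - β k) ≠ (0 : Fin n → ℕ) := by
        intro h0
        apply hba
        funext k
        have hk := congrFun h0 k
        simp only [Pi.zero_apply] at hk
        have := h k
        omega
      rw [if_neg hne]
      simp
    · push_neg at h
      obtain ⟨i, hi⟩ := h
      have hz : ∏ j, (α j).descFactorial (β j) = 0 :=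
        Finset.prod_eq_zero (Finset.mem_univ i) (Nat.descFactorial_eq_zero_iff_lt.mpr hi)
      rw [hz]
      simp

lemma iter_pderiv_smul {n : ℕ} (i : Fin n) (b : ℕ) (r : ℝ) (p : MvPolynomial (Fin n) ℝ) :
    (⇑(pderiv i))^[b] (r • p) = r • (⇑(pderiv i))^[b] p := by
  induction b generalizing p with
  | zero => simp
  | succ b ih => rw [Function.iterate_succ_apply, Derivation.map_smul, ih, ← Function.iterate_succ_apply]

lemma iter_pderiv_add {n : ℕ} (i : Fin n) (b : ℕ) (p q : MvPolynomial (Fin n) ℝ) :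
    (⇑(pderiv i))^[b] (p + q) = (⇑(pderiv i))^[b] p + (⇑(pderiv i))^[b] q := by
  induction b generalizing p q with
  | zero => simp
  | succ b ih => rw [Function.iterate_succ_apply, map_add, ih,
      ← Function.iterate_succ_apply, ← Function.iterate_succ_apply]

lemma iter_pderiv_zero {n : ℕ} (i : Fin n) (b : ℕ) :
    (⇑(pderiv i))^[b] (0 : MvPolynomial (Fin n) ℝ) = 0 := by
  induction b with
  | zero => rfl
  | succ b ih => rw [Function.iterate_succ_apply, map_zero, ih]

lemma fmd_smul {n : ℕ} (β : Fin n → ℕ) (r : ℝ) (p : MvPolynomial (Fin n) ℝ) :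
    fmd β (r • p) = r • fmd β p := by
  unfold fmd
  induction (List.finRange n) generalizing p with
  | nil => simp
  | cons i l ih => rw [List.foldr_cons, List.foldr_cons, ih, iter_pderiv_smul]

lemma fmd_add {n : ℕ} (β : Fin n → ℕ) (p q : MvPolynomial (Fin n) ℝ) :
    fmd β (p + q) = fmd β p + fmd β q := by
  unfold fmd
  induction (List.finRange n) generalizing p q with
  | nil => simp
  | cons i l ih => rw [List.foldr_cons, List.foldr_cons, List.foldr_cons, ih, iter_pderiv_add]

lemma fmd_zero {n : ℕ} (β : Fin n → ℕ) : fmd β (0 : MvPolynomial (Fin n) ℝ) = 0 := by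
  unfold fmd
  induction (List.finRange n) with
  | nil => rfl
  | cons i l ih => rw [List.foldr_cons, ih, iter_pderiv_zero]

lemma fmd_sum {n : ℕ} (β : Fin n → ℕ) {ι : Type*} (s : Finset ι)
    (g : ι → MvPolynomial (Fin n) ℝ) :
    fmd β (∑ a ∈ s, g a) = ∑ a ∈ s, fmd β (g a) := by
  classical
  induction s using Finset.induction_on with
  | empty => simp [fmd_zero]
  | @insert a s' ha ih => rw [Finset.sum_insert ha, Finset.sum_insert ha, fmd_add, ih]

noncomputable def taylorSet (n m : ℕ) : Finset (Fin n → ℕ) :=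
  (Fintype.piFinset fun _ => Finset.range (m + 1)).filter fun α => (∑ i, α i) ≤ m

noncomputable def taylorPoly {n : ℕ} (m : ℕ) (c : Fin n → ℝ) (ξ : (Fin n → ℕ) → ℝ) :
    MvPolynomial (Fin n) ℝ :=
  ∑ α ∈ taylorSet n m, (ξ α / ((∏ i, Nat.factorial (α i) : ℕ) : ℝ)) • Phi c α

lemma mem_taylorSet {n m : ℕ} {β : Fin n → ℕ} (hβ : (∑ i, β i) ≤ m) :
    β ∈ taylorSet n m := by
  refine Finset.mem_filter.mpr ⟨?_, hβ⟩
  refine Fintype.mem_piFinset.mpr fun i => Finset.mem_range.mpr ?_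
  have : β i ≤ ∑ j, β j := Finset.single_le_sum (fun j _ => Nat.zero_le _) (Finset.mem_univ i)
  omega

lemma eval_fmd_taylorPoly {n m : ℕ} (c : Fin n → ℝ) (ξ : (Fin n → ℕ) → ℝ)
    {β : Fin n → ℕ} (hβ : (∑ i, β i) ≤ m) :
    eval c (fmd β (taylorPoly m c ξ)) = ξ β := by
  unfold taylorPoly
  rw [fmd_sum, map_sum]
  have hterm : ∀ α ∈ taylorSet n m,
      eval c (fmd β ((ξ α / ((∏ i, Nat.factorial (α i) : ℕ) : ℝ)) • Phi c α))
        = if α = β then ξ β else 0 := by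
    intro α _
    rw [fmd_smul, smul_eq_C_mul, eval_mul, eval_C, eval_fmd_Phi]
    by_cases h : α = β
    · subst h
      rw [if_pos rfl, if_pos rfl]
      rw [div_mul_cancel₀]
      positivity
    · rw [if_neg h, if_neg (fun hh => h hh.symm), mul_zero]
  rw [Finset.sum_congr rfl hterm, Finset.sum_ite_eq' (taylorSet n m) β (fun _ => ξ β)]
  rw [if_pos (mem_taylorSet hβ)]

/-- **basic approximation lemma.**  Let `Ω ⊆ ℝⁿ` be a nonempty
open set, `m ≥ 1`, `K ≥ 1`, and let
`F : Ω × ℝ^M → ℝ^K` be jointly continuous, the second argument being indexed by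
pairs `(j, α)` with `j ∈ {1,…,K}` and `α` a multi-index with `|α| ≤ m`.  Let
`f : Ω → ℝ^K` be continuous and assume `f x ∈ int R_x` where
`R_x = {F x ξ : ξ ∈ ℝ^M}`, for every `x ∈ Ω`.  Then for every `x₀ ∈ Ω` and
`ε > 0` there are `δ > 0` and polynomials `P₁, …, P_K` such that for all
`x ∈ B(x₀, δ) ∩ Ω` and all `i`,
`f x i - ε ≤ F_i(x, (D^α P_j x)_{j,α}) ≤ f x i`. -/
theorem basic_approximation_lemma {n : ℕ} (m K : ℕ) (hm : 1 ≤ m) (hK : 1 ≤ K)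
    (Ω : Set (Fin n → ℝ)) (hΩopen : IsOpen Ω) (hΩne : Ω.Nonempty)
    (F : (Fin n → ℝ) → ((Fin K × {α : Fin n → ℕ // (∑ i, α i) ≤ m}) → ℝ) → Fin K → ℝ)
    (hF : ContinuousOn
      (fun p : (Fin n → ℝ) × ((Fin K × {α : Fin n → ℕ // (∑ i, α i) ≤ m}) → ℝ) =>
        F p.1 p.2) (Ω ×ˢ Set.univ))
    (f : (Fin n → ℝ) → Fin K → ℝ) (hf : ContinuousOn f Ω)
    (hR : ∀ x ∈ Ω, f x ∈ interior (Set.range (F x))) :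
    ∀ x₀ ∈ Ω, ∀ ε > (0 : ℝ), ∃ δ > (0 : ℝ),
      ∃ P : Fin K → MvPolynomial (Fin n) ℝ,
        ∀ x ∈ Metric.ball x₀ δ ∩ Ω, ∀ i : Fin K,
          f x i - ε ≤
              F x (fun q => multiDeriv q.2.1 (fun y => MvPolynomial.eval y (P q.1)) x) i ∧
            F x (fun q => multiDeriv q.2.1 (fun y => MvPolynomial.eval y (P q.1)) x) i ≤
              f x i := by
  intro x₀ hx₀ ε hε
  obtain ⟨r, hr, hball⟩ :=
    Metric.mem_nhds_iff.mp (mem_interior_iff_mem_nhds.mp (hR x₀ hx₀))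
  set c : ℝ := min (ε / 2) (r / 2) with hc_def
  have hc : 0 < c := lt_min (by linarith) (by linarith)
  set y : Fin K → ℝ := fun i => f x₀ i - c with hy_def
  have hy : y ∈ Metric.ball (f x₀) r := by
    have hdle : dist y (f x₀) ≤ c := by
      rw [dist_pi_le_iff hc.le]
      intro i
      have hyi : y i - f x₀ i = -c := by simp [hy_def]
      rw [Real.dist_eq, hyi, abs_neg, abs_of_nonneg hc.le]
    exact lt_of_le_of_lt hdle (lt_of_le_of_lt (min_le_right _ _) (by linarith))
  obtain ⟨ξ, hξ⟩ := hball hy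
  set ξt : Fin K → (Fin n → ℕ) → ℝ := fun j α =>
    if h : (∑ i, α i) ≤ m then ξ (j, ⟨α, h⟩) else 0 with hξt_def
  set P : Fin K → MvPolynomial (Fin n) ℝ := fun j => taylorPoly m x₀ (ξt j) with hP_def
  set jet : (Fin n → ℝ) → ((Fin K × {α : Fin n → ℕ // (∑ i, α i) ≤ m}) → ℝ) :=
    fun x q => eval x (fmd q.2.1 (P q.1)) with hjet_def
  have hjetkey : ∀ x, (fun q : Fin K × {α : Fin n → ℕ // (∑ i, α i) ≤ m} =>
      multiDeriv q.2.1 (fun y => eval y (P q.1)) x) = jet x := by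
    intro x
    funext q
    rw [multiDeriv_eval]
  have hjet₀ : jet x₀ = ξ := by
    funext q
    rw [hjet_def]
    simp only
    rw [eval_fmd_taylorPoly x₀ (ξt q.1) q.2.2, hξt_def]
    simp only [dif_pos q.2.2]
  set g : (Fin n → ℝ) → Fin K → ℝ := fun x => F x (jet x) with hg_def
  have hjetcont : Continuous jet :=
    continuous_pi fun q => MvPolynomial.continuous_eval (fmd q.2.1 (P q.1))
  have hgcont : ContinuousWithinAt g Ω x₀ := by
    have : ContinuousOn g Ω := by
      refine hF.comp (Continuous.continuousOn (continuous_id.prodMk hjetcont)) ?_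
      intro x hx
      exact ⟨hx, Set.mem_univ _⟩
    exact this x₀ hx₀
  have hg₀ : g x₀ = y := by rw [hg_def]; simp only; rw [hjet₀]; exact hξ
  have hc2 : (0 : ℝ) < c / 2 := by linarith
  have hgmem : g ⁻¹' Metric.ball (g x₀) (c / 2) ∈ nhdsWithin x₀ Ω :=
    hgcont (Metric.ball_mem_nhds _ hc2)
  have hfmem : f ⁻¹' Metric.ball (f x₀) (c / 2) ∈ nhdsWithin x₀ Ω :=
    (hf x₀ hx₀) (Metric.ball_mem_nhds _ hc2)
  obtain ⟨δ, hδ, hsub⟩ := Metric.mem_nhdsWithin_iff.mp (Filter.inter_mem hgmem hfmem)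
  refine ⟨δ, hδ, P, ?_⟩
  intro x hx i
  have hmem := hsub hx
  have hgx : dist (g x) (g x₀) < c / 2 := hmem.1
  have hfx : dist (f x) (f x₀) < c / 2 := hmem.2
  have hgi : |g x i - y i| < c / 2 := by
    rw [← hg₀, ← Real.dist_eq]
    exact lt_of_le_of_lt (dist_le_pi_dist (g x) (g x₀) i) hgx
  have hfi : |f x i - f x₀ i| < c / 2 := by
    rw [← Real.dist_eq]
    exact lt_of_le_of_lt (dist_le_pi_dist (f x) (f x₀) i) hfx
  have hyi : y i = f x₀ i - c := rfl
  have hcε : c ≤ ε / 2 := min_le_left _ _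
  rw [abs_lt] at hgi hfi
  have hFeq : F x (fun q => multiDeriv q.2.1 (fun y => eval y (P q.1)) x) i = g x i := by
    rw [hg_def]
    simp only
    rw [hjetkey x]
  rw [hFeq]
  constructor <;> linarith
end

section
/- For every ε > 0 there exists a set Γ_ε ⊂ Ω, closed in Ω, nowhere dense, and of Lebesgue measure zero, and a K-tuple U_ε = (U_{ε,1}, …, U_{ε,K}) of functions that are m times continuously differentiable on the open set Ω ∖ Γ_ε, such that f_i(x) − ε ≤ F_i(x, (D^α U_{ε,j}(x))_{1≤j≤K, α∈A}) ≤ f_i(x) for every x ∈ Ω ∖ Γ_ε and every i = 1, …, K. -/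
open scoped BigOperators

namespace GlobApprox

variable {n : ℕ}

/-- Box of multi-indices with every coordinate `≤ mb`. -/
def InBox (mb : ℕ) (c : (Fin n → ℕ) → ℝ) : Prop := ∀ γ : Fin n → ℕ, (∃ i, mb < γ i) → c γ = 0

def boxF (n mb : ℕ) : Finset (Fin n → ℕ) := Fintype.piFinset fun _ => Finset.range (mb + 1)

lemma mem_boxF {mb : ℕ} {γ : Fin n → ℕ} : γ ∈ boxF n mb ↔ ∀ i, γ i ≤ mb := by
  simp [boxF, Nat.lt_succ_iff]

noncomputable def poly (mb : ℕ) (a : Fin n → ℝ) (c : (Fin n → ℕ) → ℝ) :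
    (Fin n → ℝ) → ℝ :=
  fun x => ∑ γ ∈ boxF n mb, c γ * ∏ k, (x k - a k) ^ (γ k)

def shift (i : Fin n) (c : (Fin n → ℕ) → ℝ) : (Fin n → ℕ) → ℝ :=
  fun γ => ((γ i : ℝ) + 1) * c (Function.update γ i (γ i + 1))

lemma shift_inBox {mb : ℕ} {c : (Fin n → ℕ) → ℝ} (hc : InBox mb c) (i : Fin n) :
    InBox mb (shift i c) := by
  intro γ ⟨j, hj⟩
  have : c (Function.update γ i (γ i + 1)) = 0 := by
    apply hc
    by_cases h : j = i
    · subst h; exact ⟨j, by simp [Function.update_self]; omega⟩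
    · exact ⟨j, by simpa [Function.update_of_ne h] using hj⟩
  simp [shift, this]

lemma contDiff_poly (mb : ℕ) (a : Fin n → ℝ) (c : (Fin n → ℕ) → ℝ) :
    ContDiff ℝ (⊤ : ℕ∞) (poly mb a c) := by
  apply ContDiff.sum
  intro γ _
  apply ContDiff.mul contDiff_const
  apply contDiff_prod
  intro k _
  exact ((ContinuousLinearMap.proj k : ((Fin n → ℝ) →L[ℝ] ℝ)).contDiff.sub contDiff_const).pow _

lemma hasFDerivAt_factor (a : Fin n → ℝ) (k : Fin n) (p : ℕ) (x : Fin n → ℝ) :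
    HasFDerivAt (fun y : Fin n → ℝ => (y k - a k) ^ p)
      (((p : ℝ) * (x k - a k) ^ (p - 1)) • (ContinuousLinearMap.proj k : ((Fin n → ℝ) →L[ℝ] ℝ))) x := by
  have h1 : HasFDerivAt (fun y : Fin n → ℝ => y k - a k)
      (ContinuousLinearMap.proj k : ((Fin n → ℝ) →L[ℝ] ℝ)) x :=
    (ContinuousLinearMap.proj k : ((Fin n → ℝ) →L[ℝ] ℝ)).hasFDerivAt.sub_const (a k)
  have h2 : HasDerivAt (fun t : ℝ => t ^ p) ((p : ℝ) * (x k - a k) ^ (p - 1)) (x k - a k) :=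
    hasDerivAt_pow p _
  exact h2.comp_hasFDerivAt x h1

end GlobApprox

namespace GlobApprox

variable {n : ℕ}

lemma partial_poly (mb : ℕ) (a : Fin n → ℝ) (c : (Fin n → ℕ) → ℝ) (hc : InBox mb c)
    (i : Fin n) (x : Fin n → ℝ) :
    partialDerivOp i (poly mb a c) x = poly mb a (shift i c) x := by
  classical
  -- the full derivative of poly
  have hterm : ∀ γ : Fin n → ℕ, HasFDerivAt (fun y => c γ * ∏ k, (y k - a k) ^ (γ k))
      (c γ • (∑ k, (∏ j ∈ Finset.univ.erase k, (x j - a j) ^ (γ j)) •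
        (((γ k : ℝ) * (x k - a k) ^ (γ k - 1)) •
          (ContinuousLinearMap.proj k : ((Fin n → ℝ) →L[ℝ] ℝ))))) x := by
    intro γ
    exact (HasFDerivAt.finset_prod (fun k _ => hasFDerivAt_factor a k (γ k) x)).const_mul (c γ)
  have hsum : HasFDerivAt (poly mb a c)
      (∑ γ ∈ boxF n mb, c γ • (∑ k, (∏ j ∈ Finset.univ.erase k, (x j - a j) ^ (γ j)) •
        (((γ k : ℝ) * (x k - a k) ^ (γ k - 1)) •
          (ContinuousLinearMap.proj k : ((Fin n → ℝ) →L[ℝ] ℝ))))) x :=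
    HasFDerivAt.fun_sum (fun γ _ => hterm γ)
  have hfd : partialDerivOp i (poly mb a c) x
      = ∑ γ ∈ boxF n mb, c γ * ((γ i : ℝ) * (x i - a i) ^ (γ i - 1) *
          ∏ j ∈ Finset.univ.erase i, (x j - a j) ^ (γ j)) := by
    rw [partialDerivOp, hsum.fderiv]
    rw [ContinuousLinearMap.sum_apply]
    refine Finset.sum_congr rfl (fun γ _ => ?_)
    rw [ContinuousLinearMap.smul_apply, ContinuousLinearMap.sum_apply]
    rw [Finset.sum_eq_single i]
    · simp only [ContinuousLinearMap.smul_apply, ContinuousLinearMap.proj_apply,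
        Pi.single_eq_same, smul_eq_mul, mul_one]
      ring
    · intro k _ hk
      simp [ContinuousLinearMap.smul_apply, ContinuousLinearMap.proj_apply,
        Pi.single_eq_of_ne hk]
    · intro h; exact absurd (Finset.mem_univ i) h
  rw [hfd]
  unfold poly shift
  have L : ∑ γ ∈ boxF n mb, c γ * ((γ i : ℝ) * (x i - a i) ^ (γ i - 1) *
        ∏ j ∈ Finset.univ.erase i, (x j - a j) ^ (γ j))
      = ∑ γ ∈ (boxF n mb).filter (fun γ => 0 < γ i), c γ * ((γ i : ℝ) * (x i - a i) ^ (γ i - 1) *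
        ∏ j ∈ Finset.univ.erase i, (x j - a j) ^ (γ j)) := by
    refine (Finset.sum_filter_of_ne (fun γ _ hne => ?_)).symm
    by_contra h
    push_neg at h
    simp [Nat.le_zero.mp h] at hne
  have R : ∑ γ ∈ boxF n mb, ((γ i : ℝ) + 1) * c (Function.update γ i (γ i + 1)) *
        ∏ k, (x k - a k) ^ (γ k)
      = ∑ γ ∈ (boxF n mb).filter (fun γ => γ i < mb), ((γ i : ℝ) + 1) *
        c (Function.update γ i (γ i + 1)) * ∏ k, (x k - a k) ^ (γ k) := by
    refine (Finset.sum_filter_of_ne (fun γ hγ hne => ?_)).symm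
    by_contra h
    push_neg at h
    have h2 : c (Function.update γ i (γ i + 1)) = 0 := by
      apply hc
      exact ⟨i, by simp [Function.update_self]; omega⟩
    simp [h2] at hne
  rw [L, R]
  refine Finset.sum_nbij' (fun δ => Function.update δ i (δ i - 1))
    (fun γ => Function.update γ i (γ i + 1)) ?_ ?_ ?_ ?_ ?_
  · intro δ hδ
    rw [Finset.mem_filter] at hδ ⊢
    rw [mem_boxF] at hδ ⊢
    obtain ⟨hδ1, hδ2⟩ := hδ
    constructor
    · intro k
      have h1 := hδ1 k
      have h2 := hδ1 i
      by_cases h : k = i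
      · subst h; simp [Function.update_self]; omega
      · simp [Function.update_of_ne h, h1]
    · have := hδ1 i
      simp [Function.update_self]; omega
  · intro γ hγ
    rw [Finset.mem_filter] at hγ ⊢
    rw [mem_boxF] at hγ ⊢
    obtain ⟨hγ1, hγ2⟩ := hγ
    constructor
    · intro k
      have h1 := hγ1 k
      have h2 := hγ1 i
      by_cases h : k = i
      · subst h; simp [Function.update_self]; omega
      · simp [Function.update_of_ne h, h1]
    · simp [Function.update_self]
  · intro δ hδ
    rw [Finset.mem_filter] at hδ
    funext k
    by_cases h : k = i
    · subst h; simp [Function.update_self]; omega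
    · simp [Function.update_of_ne h]
  · intro γ hγ
    funext k
    by_cases h : k = i
    · subst h; simp [Function.update_self]
    · simp [Function.update_of_ne h]
  · intro δ hδ
    rw [Finset.mem_filter] at hδ
    obtain ⟨hδ1, hδ2⟩ := hδ
    have e1 : Function.update (Function.update δ i (δ i - 1)) i (Function.update δ i (δ i - 1) i + 1) = δ := by
      funext k
      by_cases h : k = i
      · subst h; simp [Function.update_self]; omega
      · simp [Function.update_of_ne h]
    have e2 : ((Function.update δ i (δ i - 1) i : ℕ) : ℝ) + 1 = (δ i : ℝ) := by
      simp only [Function.update_self]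
      rw [Nat.cast_pred hδ2]
      ring
    rw [e1, e2]
    have e3 : ∏ k, (x k - a k) ^ (Function.update δ i (δ i - 1) k)
        = (x i - a i) ^ (δ i - 1) * ∏ j ∈ Finset.univ.erase i, (x j - a j) ^ (δ j) := by
      rw [← Finset.mul_prod_erase Finset.univ _ (Finset.mem_univ i)]
      congr 1
      · simp [Function.update_self]
      · refine Finset.prod_congr rfl (fun k hk => ?_)
        rw [Finset.mem_erase] at hk
        simp [Function.update_of_ne hk.1]
    rw [e3]
    ring

end GlobApprox

namespace GlobApprox

variable {n : ℕ}

lemma iter_shift_inBox {mb : ℕ} {c : (Fin n → ℕ) → ℝ} (hc : InBox mb c) (i : Fin n) (t : ℕ) :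
    InBox mb ((shift i)^[t] c) := by
  induction t with
  | zero => exact hc
  | succ t ih => rw [Function.iterate_succ_apply']; exact shift_inBox ih i

lemma iter_partial_poly (mb : ℕ) (a : Fin n → ℝ) (c : (Fin n → ℕ) → ℝ) (hc : InBox mb c)
    (i : Fin n) (t : ℕ) :
    (partialDerivOp i)^[t] (poly mb a c) = poly mb a ((shift i)^[t] c) := by
  induction t with
  | zero => rfl
  | succ t ih =>
    rw [Function.iterate_succ_apply', ih, Function.iterate_succ_apply']
    funext x
    exact partial_poly mb a _ (iter_shift_inBox hc i t) i x

def shiftList (α : Fin n → ℕ) (l : List (Fin n)) (c : (Fin n → ℕ) → ℝ) : (Fin n → ℕ) → ℝ :=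
  l.foldr (fun i d => (shift i)^[α i] d) c

lemma shiftList_inBox {mb : ℕ} {c : (Fin n → ℕ) → ℝ} (hc : InBox mb c) (α : Fin n → ℕ) :
    ∀ l : List (Fin n), InBox mb (shiftList α l c)
  | [] => hc
  | i :: l => iter_shift_inBox (shiftList_inBox hc α l) i (α i)

lemma foldr_deriv_poly (mb : ℕ) (a : Fin n → ℝ) (α : Fin n → ℕ) :
    ∀ (l : List (Fin n)) (c : (Fin n → ℕ) → ℝ), InBox mb c →
    (l.foldr (fun i g => (partialDerivOp i)^[α i] ∘ g) id) (poly mb a c)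
      = poly mb a (shiftList α l c)
  | [], c, hc => rfl
  | i :: l, c, hc => by
    show (partialDerivOp i)^[α i] ((l.foldr (fun i g => (partialDerivOp i)^[α i] ∘ g) id) (poly mb a c)) = _
    rw [foldr_deriv_poly mb a α l c hc]
    exact iter_partial_poly mb a _ (shiftList_inBox hc α l) i (α i)

lemma multiDeriv_poly (mb : ℕ) (a : Fin n → ℝ) (α : Fin n → ℕ) (c : (Fin n → ℕ) → ℝ)
    (hc : InBox mb c) :
    multiDeriv α (poly mb a c) = poly mb a (shiftList α (List.finRange n) c) :=
  foldr_deriv_poly mb a α (List.finRange n) c hc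

lemma iter_shift_apply (i : Fin n) (t : ℕ) (c : (Fin n → ℕ) → ℝ) (γ : Fin n → ℕ) :
    (shift i)^[t] c γ
      = (∏ s ∈ Finset.range t, ((γ i : ℝ) + s + 1)) * c (Function.update γ i (γ i + t)) := by
  induction t generalizing c with
  | zero => simp
  | succ t ih =>
    rw [Function.iterate_succ_apply, ih]
    unfold shift
    rw [Finset.prod_range_succ]
    have e1 : Function.update γ i (γ i + t) i = γ i + t := Function.update_self _ _ _
    have e2 : Function.update (Function.update γ i (γ i + t)) i (γ i + t + 1)
        = Function.update γ i (γ i + (t + 1)) := by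
      rw [Function.update_idem]
      congr 1
    rw [e1, e2]
    push_cast
    ring

lemma shiftList_apply (α : Fin n → ℕ) :
    ∀ (l : List (Fin n)), l.Nodup → ∀ (c : (Fin n → ℕ) → ℝ) (γ : Fin n → ℕ),
    shiftList α l c γ
      = (l.map (fun i => ∏ s ∈ Finset.range (α i), ((γ i : ℝ) + s + 1))).prod
        * c (fun j => if j ∈ l then γ j + α j else γ j)
  | [], _, c, γ => by
    simp only [shiftList, List.foldr_nil, List.map_nil, List.prod_nil, one_mul]
    congr 1
  | i :: l, hnd, c, γ => by
    rw [List.nodup_cons] at hnd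
    obtain ⟨hi, hnd⟩ := hnd
    show (shift i)^[α i] (shiftList α l c) γ = _
    rw [iter_shift_apply, shiftList_apply α l hnd c (Function.update γ i (γ i + α i))]
    have e1 : l.map (fun i' => ∏ s ∈ Finset.range (α i'),
          ((Function.update γ i (γ i + α i) i' : ℝ) + s + 1))
        = l.map (fun i' => ∏ s ∈ Finset.range (α i'), ((γ i' : ℝ) + s + 1)) := by
      apply List.map_congr_left
      intro a ha
      have : a ≠ i := fun h => hi (h ▸ ha)
      rw [Function.update_of_ne this]
    have e2 : (fun j => if j ∈ l then Function.update γ i (γ i + α i) j + α j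
          else Function.update γ i (γ i + α i) j)
        = (fun j => if j ∈ i :: l then γ j + α j else γ j) := by
      funext j
      by_cases hjl : j ∈ l
      · have hji : j ≠ i := fun h => hi (h ▸ hjl)
        simp [hjl, Function.update_of_ne hji, List.mem_cons, hjl]
      · by_cases hji : j = i
        · subst hji
          simp [hjl, Function.update_self]
        · simp [hjl, Function.update_of_ne hji, hji]
    rw [e1, e2, List.map_cons, List.prod_cons]
    ring

lemma prod_range_cast_factorial (t : ℕ) :
    (∏ s ∈ Finset.range t, ((0 : ℝ) + s + 1)) = (t.factorial : ℝ) := by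
  rw [← Finset.prod_range_add_one_eq_factorial t]
  push_cast
  apply Finset.prod_congr rfl
  intro s _
  ring

lemma poly_eval_center (mb : ℕ) (a : Fin n → ℝ) (c : (Fin n → ℕ) → ℝ) :
    poly mb a c a = c 0 := by
  unfold poly
  rw [Finset.sum_eq_single (0 : Fin n → ℕ)]
  · simp
  · intro γ _ hγ
    have : ∃ k, γ k ≠ 0 := by
      by_contra h
      push_neg at h
      exact hγ (funext h)
    obtain ⟨k, hk⟩ := this
    have : ∏ j, (a j - a j) ^ (γ j) = 0 := by
      apply Finset.prod_eq_zero (Finset.mem_univ k)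
      simp [zero_pow hk]
    rw [this, mul_zero]
  · intro h
    exact absurd (by rw [mem_boxF]; intro i; exact Nat.zero_le _) h

lemma multiDeriv_poly_center (mb : ℕ) (a : Fin n → ℝ) (α : Fin n → ℕ)
    (c : (Fin n → ℕ) → ℝ) (hc : InBox mb c) :
    multiDeriv α (poly mb a c) a = (∏ i, ((α i).factorial : ℝ)) * c α := by
  rw [multiDeriv_poly mb a α c hc, poly_eval_center]
  rw [shiftList_apply α (List.finRange n) (List.nodup_finRange n) c 0]
  congr 1
  · rw [Fin.prod_univ_def]
    congr 1
    apply List.map_congr_left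
    intro i _
    simpa using prod_range_cast_factorial (α i)
  · congr 1
    funext j
    simp [List.mem_finRange]

end GlobApprox

namespace GlobApprox

variable {n : ℕ}

lemma partial_eqOn {s : Set (Fin n → ℝ)} (hs : IsOpen s) {f g : (Fin n → ℝ) → ℝ}
    (h : Set.EqOn f g s) (i : Fin n) :
    Set.EqOn (partialDerivOp i f) (partialDerivOp i g) s := by
  intro x hx
  unfold partialDerivOp
  have : f =ᶠ[nhds x] g := Filter.eventuallyEq_of_mem (hs.mem_nhds hx) h
  rw [this.fderiv_eq]

lemma iter_partial_eqOn {s : Set (Fin n → ℝ)} (hs : IsOpen s) {f g : (Fin n → ℝ) → ℝ}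
    (h : Set.EqOn f g s) (i : Fin n) (t : ℕ) :
    Set.EqOn ((partialDerivOp i)^[t] f) ((partialDerivOp i)^[t] g) s := by
  induction t generalizing f g with
  | zero => exact h
  | succ t ih =>
    rw [Function.iterate_succ_apply', Function.iterate_succ_apply']
    exact partial_eqOn hs (ih h) i

lemma multiDeriv_eqOn {s : Set (Fin n → ℝ)} (hs : IsOpen s) {f g : (Fin n → ℝ) → ℝ}
    (h : Set.EqOn f g s) (α : Fin n → ℕ) :
    Set.EqOn (multiDeriv α f) (multiDeriv α g) s := by
  suffices H : ∀ l : List (Fin n), Set.EqOn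
      ((l.foldr (fun i g => (partialDerivOp i)^[α i] ∘ g) id) f)
      ((l.foldr (fun i g => (partialDerivOp i)^[α i] ∘ g) id) g) s from H (List.finRange n)
  intro l
  induction l with
  | nil => exact h
  | cons i l ih => exact iter_partial_eqOn hs ih i (α i)

end GlobApprox

namespace GlobApprox

lemma local_sol {n : ℕ} (m K : ℕ) (hK : 1 ≤ K)
    (Ω : Set (Fin n → ℝ)) (hΩopen : IsOpen Ω)
    (F : (Fin n → ℝ) → ((Fin K × {α : Fin n → ℕ // (∑ i, α i) ≤ m}) → ℝ) → Fin K → ℝ)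
    (hF : ContinuousOn
      (fun p : (Fin n → ℝ) × ((Fin K × {α : Fin n → ℕ // (∑ i, α i) ≤ m}) → ℝ) =>
        F p.1 p.2) (Ω ×ˢ Set.univ))
    (f : (Fin n → ℝ) → Fin K → ℝ) (hf : ContinuousOn f Ω)
    (hR : ∀ x ∈ Ω, f x ∈ interior (Set.range (F x)))
    {ε : ℝ} (hε : 0 < ε) {x₀ : Fin n → ℝ} (hx₀ : x₀ ∈ Ω) :
    ∃ r > (0:ℝ), Metric.ball x₀ r ⊆ Ω ∧ ∃ U : Fin K → (Fin n → ℝ) → ℝ,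
      (∀ j, ContDiff ℝ (⊤ : ℕ∞) (U j)) ∧
      ∀ y ∈ Metric.ball x₀ r, ∀ i : Fin K,
        f y i - ε ≤ F y (fun q => multiDeriv q.2.1 (U q.1) y) i ∧
          F y (fun q => multiDeriv q.2.1 (U q.1) y) i ≤ f y i := by
  classical
  -- a ball inside the range
  obtain ⟨ρ, hρ, hball⟩ := Metric.mem_nhds_iff.mp (mem_interior_iff_mem_nhds.mp (hR x₀ hx₀))
  set c : ℝ := min (ε/2) (ρ/2) with hcdef
  have hc : 0 < c := lt_min (by linarith) (by linarith)
  have hcε : c ≤ ε/2 := min_le_left _ _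
  have hcρ : c < ρ := lt_of_le_of_lt (min_le_right _ _) (by linarith)
  set y₀ : Fin K → ℝ := fun i => f x₀ i - c with hy₀def
  have hy₀mem : y₀ ∈ Metric.ball (f x₀) ρ := by
    rw [Metric.mem_ball]
    have : dist y₀ (f x₀) ≤ c := by
      rw [dist_pi_le_iff hc.le]
      intro i
      rw [Real.dist_eq]
      have : y₀ i - f x₀ i = -c := by simp [hy₀def]
      rw [this, abs_neg, abs_of_nonneg hc.le]
    linarith
  obtain ⟨ξ, hξ⟩ := hball hy₀mem
  -- the coefficients and the polynomials
  set coef : Fin K → (Fin n → ℕ) → ℝ := fun j γ =>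
    if h : (∑ i, γ i) ≤ m then ξ (j, ⟨γ, h⟩) / (∏ i, ((γ i).factorial : ℝ)) else 0 with hcoefdef
  have hcoefbox : ∀ j, InBox m (coef j) := by
    intro j γ ⟨i, hi⟩
    have : ¬ (∑ k, γ k) ≤ m := by
      have : γ i ≤ ∑ k, γ k := Finset.single_le_sum (fun k _ => Nat.zero_le _) (Finset.mem_univ i)
      omega
    simp [hcoefdef, this]
  set U : Fin K → (Fin n → ℝ) → ℝ := fun j => poly m x₀ (coef j) with hUdef
  have hUsmooth : ∀ j, ContDiff ℝ (⊤ : ℕ∞) (U j) := fun j =>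
    (contDiff_poly m x₀ (coef j)).of_le (mod_cast le_top)
  have hfacne : ∀ α : Fin n → ℕ, (∏ i, ((α i).factorial : ℝ)) ≠ 0 := by
    intro α
    apply Finset.prod_ne_zero_iff.mpr
    intro i _
    exact_mod_cast (α i).factorial_ne_zero
  have hval : ∀ (j : Fin K) (α : Fin n → ℕ) (hα : (∑ i, α i) ≤ m),
      multiDeriv α (U j) x₀ = ξ (j, ⟨α, hα⟩) := by
    intro j α hα
    rw [hUdef]
    rw [multiDeriv_poly_center m x₀ α (coef j) (hcoefbox j)]
    rw [hcoefdef]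
    simp only [hα, dif_pos]
    field_simp
  -- the map x ↦ collection of derivatives
  set G : (Fin n → ℝ) → ((Fin K × {α : Fin n → ℕ // (∑ i, α i) ≤ m}) → ℝ) :=
    fun x q => multiDeriv q.2.1 (U q.1) x with hGdef
  have hGcont : Continuous G := by
    apply continuous_pi
    rintro ⟨j, α, hα⟩
    have : multiDeriv α (U j) = poly m x₀ (shiftList α (List.finRange n) (coef j)) :=
      multiDeriv_poly m x₀ α (coef j) (hcoefbox j)
    rw [hGdef]
    simp only
    rw [this]
    exact (contDiff_poly m x₀ _).continuous
  have hGx₀ : G x₀ = ξ := by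
    funext q
    obtain ⟨j, α, hα⟩ := q
    exact hval j α hα
  set H : (Fin n → ℝ) → Fin K → ℝ := fun x => F x (G x) with hHdef
  have hHcont : ContinuousAt H x₀ := by
    have h1 : ContinuousAt (fun p : (Fin n → ℝ) × _ => F p.1 p.2) (x₀, G x₀) := by
      apply hF.continuousAt
      exact (hΩopen.prod isOpen_univ).mem_nhds (by simp [hx₀])
    have h2 : ContinuousAt (fun x : Fin n → ℝ => (x, G x)) x₀ :=
      continuousAt_id.prodMk hGcont.continuousAt
    exact ContinuousAt.comp (f := fun x : Fin n → ℝ => (x, G x)) h1 h2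
  have hHx₀ : H x₀ = y₀ := by rw [hHdef]; simp only; rw [hGx₀, hξ]
  have hfcont : ContinuousAt f x₀ := hf.continuousAt (hΩopen.mem_nhds hx₀)
  -- choose the radius
  have hW : Ω ∩ (H ⁻¹' Metric.ball (H x₀) (c/4)) ∩ (f ⁻¹' Metric.ball (f x₀) (c/4)) ∈ nhds x₀ := by
    refine Filter.inter_mem (Filter.inter_mem (hΩopen.mem_nhds hx₀) ?_) ?_
    · exact hHcont.preimage_mem_nhds (Metric.ball_mem_nhds _ (by linarith))
    · exact hfcont.preimage_mem_nhds (Metric.ball_mem_nhds _ (by linarith))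
  obtain ⟨r, hr, hrsub⟩ := Metric.mem_nhds_iff.mp hW
  refine ⟨r, hr, fun y hy => (hrsub hy).1.1, U, hUsmooth, ?_⟩
  intro y hy i
  have hy1 := hrsub hy
  have hHy : dist (H y i) (H x₀ i) ≤ dist (H y) (H x₀) := dist_le_pi_dist _ _ i
  have hHy2 : dist (H y) (H x₀) < c/4 := hy1.1.2
  have hfy : dist (f y i) (f x₀ i) ≤ dist (f y) (f x₀) := dist_le_pi_dist _ _ i
  have hfy2 : dist (f y) (f x₀) < c/4 := hy1.2
  have e1 : |H y i - (f x₀ i - c)| < c/4 := by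
    have : H x₀ i = f x₀ i - c := by rw [hHx₀]
    rw [Real.dist_eq, this] at hHy
    linarith
  have e2 : |f y i - f x₀ i| < c/4 := by
    rw [Real.dist_eq] at hfy
    linarith
  have hgoal : F y (fun q => multiDeriv q.2.1 (U q.1) y) i = H y i := rfl
  rw [hgoal]
  rw [abs_lt] at e1 e2
  constructor <;> linarith [e1.1, e1.2, e2.1, e2.2, hcε]

end GlobApprox


open GlobApprox

/-- **global approximation theorem.**  With `Ω ⊆ ℝⁿ` nonempty
open, `m ≥ 1`, `K ≥ 1`, `F` jointly continuous, `f` continuous and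
`f x ∈ int R_x` for all `x ∈ Ω`:  for every `ε > 0` there exist a set
`Γ_ε ⊆ Ω`, closed in `Ω` (i.e. `Ω \ Γ_ε` is open), nowhere dense
(empty interior) and of Lebesgue measure zero, and functions
`U_{ε,1}, …, U_{ε,K}` which are `m` times continuously differentiable on
`Ω \ Γ_ε`, such that
`f x i - ε ≤ F_i(x, (D^α U_{ε,j} x)_{j,α}) ≤ f x i` on `Ω \ Γ_ε`. -/
theorem global_approximation {n : ℕ} (m K : ℕ) (hm : 1 ≤ m) (hK : 1 ≤ K)
    (Ω : Set (Fin n → ℝ)) (hΩopen : IsOpen Ω) (hΩne : Ω.Nonempty)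
    (F : (Fin n → ℝ) → ((Fin K × {α : Fin n → ℕ // (∑ i, α i) ≤ m}) → ℝ) → Fin K → ℝ)
    (hF : ContinuousOn
      (fun p : (Fin n → ℝ) × ((Fin K × {α : Fin n → ℕ // (∑ i, α i) ≤ m}) → ℝ) =>
        F p.1 p.2) (Ω ×ˢ Set.univ))
    (f : (Fin n → ℝ) → Fin K → ℝ) (hf : ContinuousOn f Ω)
    (hR : ∀ x ∈ Ω, f x ∈ interior (Set.range (F x))) :
    ∀ ε > (0 : ℝ), ∃ Γ : Set (Fin n → ℝ),
      Γ ⊆ Ω ∧ IsOpen (Ω \ Γ) ∧ interior Γ = ∅ ∧ MeasureTheory.volume Γ = 0 ∧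
      ∃ U : Fin K → (Fin n → ℝ) → ℝ,
        (∀ j : Fin K, ContDiffOn ℝ m (U j) (Ω \ Γ)) ∧
        ∀ x ∈ Ω \ Γ, ∀ i : Fin K,
          f x i - ε ≤ F x (fun q => multiDeriv q.2.1 (U q.1) x) i ∧
            F x (fun q => multiDeriv q.2.1 (U q.1) x) i ≤ f x i := by
  classical
  intro ε hε
  -- the collection of good balls
  set P : Set (Fin n → ℝ) → Prop := fun s =>
    s ⊆ Ω ∧ (∃ z ρ, 0 < ρ ∧ s = Metric.ball z ρ) ∧
    ∃ U : Fin K → (Fin n → ℝ) → ℝ, (∀ j, ContDiff ℝ (⊤ : ℕ∞) (U j)) ∧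
      ∀ y ∈ s, ∀ i : Fin K,
        f y i - ε ≤ F y (fun q => multiDeriv q.2.1 (U q.1) y) i ∧
          F y (fun q => multiDeriv q.2.1 (U q.1) y) i ≤ f y i with hPdef
  set S : Set (Set (Fin n → ℝ)) := {s | P s} with hSdef
  have hScover : ⋃₀ S = Ω := by
    apply Set.Subset.antisymm
    · exact Set.sUnion_subset (fun s hs => hs.1)
    · intro x hx
      obtain ⟨r, hr, hsub, U, hUsm, hUineq⟩ := local_sol m K hK Ω hΩopen F hF f hf hR hε hx
      exact ⟨Metric.ball x r, ⟨hsub, ⟨x, r, hr, rfl⟩, U, hUsm, hUineq⟩, Metric.mem_ball_self hr⟩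
  have hSopen : ∀ s ∈ S, IsOpen s := by
    rintro s ⟨-, ⟨z, ρ, -, rfl⟩, -⟩
    exact Metric.isOpen_ball
  obtain ⟨T, hTc, hTS, hTU⟩ := TopologicalSpace.isOpen_sUnion_countable S hSopen
  rw [hScover] at hTU
  have hTne : T.Nonempty := by
    rcases hΩne with ⟨x, hx⟩
    rw [← hTU] at hx
    obtain ⟨t, ht, -⟩ := hx
    exact ⟨t, ht⟩
  obtain ⟨g, hg⟩ := hTc.exists_eq_range hTne
  have hgS : ∀ k, P (g k) := fun k => hTS (hg ▸ Set.mem_range_self k)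
  have hgopen : ∀ k, IsOpen (g k) := fun k => hSopen _ (hTS (hg ▸ Set.mem_range_self k))
  have hgsub : ∀ k, g k ⊆ Ω := fun k => (hgS k).1
  have hgball : ∀ k, ∃ z ρ, 0 < ρ ∧ g k = Metric.ball z ρ := fun k => (hgS k).2.1
  choose W hWsm hWineq using fun k => (hgS k).2.2
  have hgcover : Ω = ⋃ k, g k := by
    rw [← hTU, hg, Set.sUnion_range]
  -- the disjointified pieces
  set V : ℕ → Set (Fin n → ℝ) := fun k => g k \ ⋃ l ∈ Finset.range k, closure (g l) with hVdef
  have hVopen : ∀ k, IsOpen (V k) := by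
    intro k
    apply (hgopen k).sdiff
    exact isClosed_biUnion_finset (fun l _ => isClosed_closure)
  have hVsub : ∀ k, V k ⊆ g k := fun k => Set.diff_subset
  have hVdisj : ∀ k l, k < l → ∀ x, x ∈ V k → x ∈ V l → False := by
    intro k l hkl x hxk hxl
    exact hxl.2 (Set.mem_biUnion (Finset.mem_range.mpr hkl) (subset_closure hxk.1))
  set A : Set (Fin n → ℝ) := ⋃ k, V k with hAdef
  have hAsub : A ⊆ Ω := Set.iUnion_subset (fun k => (hVsub k).trans (hgsub k))
  set Γ : Set (Fin n → ℝ) := Ω \ A with hΓdef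
  have hΩΓ : Ω \ Γ = A := Set.diff_diff_cancel_left hAsub
  -- Γ is contained in the union of frontiers
  have hΓfr : Γ ⊆ ⋃ k, frontier (g k) := by
    intro x hx
    obtain ⟨hxΩ, hxA⟩ := hx
    have hex : ∃ k, x ∈ g k := by
      rw [hgcover] at hxΩ
      exact Set.mem_iUnion.mp hxΩ
    set k₀ := Nat.find hex with hk₀def
    have hxk₀ : x ∈ g k₀ := Nat.find_spec hex
    have hxV : x ∉ V k₀ := fun h => hxA (Set.mem_iUnion.mpr ⟨k₀, h⟩)
    have : x ∈ ⋃ l ∈ Finset.range k₀, closure (g l) := by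
      by_contra h
      exact hxV ⟨hxk₀, h⟩
    obtain ⟨l, hl, hxl⟩ := Set.mem_iUnion₂.mp this
    rw [Finset.mem_range] at hl
    have hnot : x ∉ g l := Nat.find_min hex hl
    refine Set.mem_iUnion.mpr ⟨l, ?_⟩
    rw [frontier, (hgopen l).interior_eq]
    exact ⟨hxl, hnot⟩
  have hfrnull : ∀ k, MeasureTheory.volume (frontier (g k)) = 0 := by
    intro k
    obtain ⟨z, ρ, hρ, hb⟩ := hgball k
    rw [hb]
    have h1 : frontier (Metric.ball z ρ) ⊆ Metric.closedBall z ρ \ Metric.ball z ρ := by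
      rw [frontier, Metric.isOpen_ball.interior_eq]
      exact Set.diff_subset_diff_left Metric.closure_ball_subset_closedBall
    refine MeasureTheory.measure_mono_null h1 ?_
    rw [MeasureTheory.measure_diff Metric.ball_subset_closedBall
      Metric.isOpen_ball.measurableSet.nullMeasurableSet ?_]
    · rw [Real.volume_pi_closedBall z hρ.le, Real.volume_pi_ball z hρ, tsub_self]
    · rw [Real.volume_pi_ball z hρ]
      exact ENNReal.ofReal_ne_top
  have hΓnull : MeasureTheory.volume Γ = 0 :=
    MeasureTheory.measure_mono_null hΓfr
      (MeasureTheory.measure_iUnion_null hfrnull)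
  have hΓint : interior Γ = ∅ := by
    by_contra h
    obtain ⟨x, hx⟩ := Set.nonempty_iff_ne_empty.mpr h
    have hpos : 0 < MeasureTheory.volume (interior Γ) :=
      (isOpen_interior.measure_pos MeasureTheory.volume ⟨x, hx⟩)
    have : MeasureTheory.volume (interior Γ) = 0 :=
      MeasureTheory.measure_mono_null interior_subset hΓnull
    simp [this] at hpos
  -- the glued function
  set Ufun : Fin K → (Fin n → ℝ) → ℝ := fun j x =>
    if h : ∃ k, x ∈ V k then W (Nat.find h) j x else 0 with hUfundef
  have hUeq' : ∀ (k : ℕ) (j : Fin K), Set.EqOn (Ufun j) (W k j) (V k) := by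
    intro k j x hx
    have h : ∃ k', x ∈ V k' := ⟨k, hx⟩
    have hfind : Nat.find h = k := by
      have h1 : x ∈ V (Nat.find h) := Nat.find_spec h
      by_contra hne
      rcases Nat.lt_or_ge (Nat.find h) k with hlt | hge
      · exact hVdisj _ _ hlt x h1 hx
      · exact hVdisj _ _ (lt_of_le_of_ne hge (Ne.symm hne)) x hx h1
    simp only [hUfundef, dif_pos h, hfind]
  refine ⟨Γ, Set.diff_subset, ?_, hΓint, hΓnull, Ufun, ?_, ?_⟩
  · rw [hΩΓ]; exact isOpen_iUnion hVopen
  · intro j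
    rw [hΩΓ]
    intro x hx
    obtain ⟨k, hk⟩ := Set.mem_iUnion.mp hx
    have hck : ContDiffOn ℝ m (Ufun j) (V k) :=
      (((hWsm k j).of_le (by exact_mod_cast le_top)).contDiffOn).congr (hUeq' k j)
    exact ((hck x hk).contDiffAt ((hVopen k).mem_nhds hk)).contDiffWithinAt
  · intro x hx i
    rw [hΩΓ] at hx
    obtain ⟨k, hk⟩ := Set.mem_iUnion.mp hx
    have harg : (fun q : Fin K × {α : Fin n → ℕ // (∑ i, α i) ≤ m} =>
        multiDeriv q.2.1 (Ufun q.1) x) = fun q => multiDeriv q.2.1 (W k q.1) x := by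
      funext q
      exact multiDeriv_eqOn (hVopen k) (hUeq' k q.1) q.2.1 hk
    rw [harg]
    exact hWineq k x (hVsub k hk) i
end
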